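/- Let F be a nonempty closed convex set of density matrices on ℂ^n and let ρ be a density matrix. Then the generalized robustness satisfies the duality R(ρ) = sup{ Re Tr(Wρ) − 1 : W an n×n positive semidefinite Hermitian matrix with Re Tr(Wσ) ≤ 1 for all σ ∈ F }, as an equality of values in [0, ∞]. -/

import Mathlib

/-!
Weak duality: if `σ = (ρ + λω)/(1+λ) ∈ F` and `W` is feasible, then
`Tr(Wρ) = (1+λ) Tr(Wσ) - λ Tr(Wω) ≤ 1 + λ`, because `Tr(Wω) ≥ 0`.

Strong duality: if `λ` is not feasible, the mixtures `(ρ + λω)/(1+λ)` with `ω` a density matrix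
form a compact convex set disjoint from `F`, so Hahn–Banach and the trace pairing give a Hermitian
`A` and a level `u` with `Re Tr(Aσ) < u` on `F` and `> u` on the mixtures. Let `m` be the minimum
of `Re Tr(Aω)` over density matrices, attained at `ω₀`; testing on pure states shows `A - m ≥ 0`,
and any `σ ∈ F` gives `m ≤ Re Tr(Aσ) < u`. Then `W = (A - m)/(u - m)` is feasible, and the
mixture built from `ω₀` gives `Tr(Wρ) - 1 > λ`.
-/

open Matrix
open scoped Kronecker BigOperators ComplexOrder ENNReal EReal

noncomputable section

/-- A density matrix on `ℂ^n`: positive semidefinite with unit trace. -/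
def IsDensityMatrix {n : ℕ} (ρ : Matrix (Fin n) (Fin n) ℂ) : Prop :=
  ρ.PosSemidef ∧ ρ.trace = 1

/-- The Choi matrix `∑ i j, E_ij ⊗ Λ(E_ij)` of a linear map on matrices. -/
def choiMatrix {n m : ℕ}
    (Λ : Matrix (Fin n) (Fin n) ℂ →ₗ[ℂ] Matrix (Fin m) (Fin m) ℂ) :
    Matrix (Fin n × Fin m) (Fin n × Fin m) ℂ :=
  ∑ i : Fin n, ∑ j : Fin n,
    (Matrix.single i j (1 : ℂ)) ⊗ₖ (Λ (Matrix.single i j (1 : ℂ)))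

/-- A CPTP map: trace preserving and completely positive (PSD Choi matrix). -/
def IsCPTP {n m : ℕ}
    (Λ : Matrix (Fin n) (Fin n) ℂ →ₗ[ℂ] Matrix (Fin m) (Fin m) ℂ) : Prop :=
  (∀ A, (Λ A).trace = A.trace) ∧ (choiMatrix Λ).PosSemidef

/-- A POVM: a finite family of PSD matrices summing to the identity. -/
def IsPOVM {m : ℕ} {ι : Type} [Fintype ι] (M : ι → Matrix (Fin m) (Fin m) ℂ) : Prop :=
  (∀ i, (M i).PosSemidef) ∧ (∑ i, M i) = 1

/-- Outcome probability `P_i^τ(θ) = Re Tr(Φ_θ(τ) M_i)`. -/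
def outcomeProb {n m : ℕ} {ι : Type}
    (Φ : ℝ → (Matrix (Fin n) (Fin n) ℂ →ₗ[ℂ] Matrix (Fin m) (Fin m) ℂ))
    (M : ι → Matrix (Fin m) (Fin m) ℂ)
    (τ : Matrix (Fin n) (Fin n) ℂ) (i : ι) (θ : ℝ) : ℝ :=
  ((Φ θ τ * M i).trace).re

/-- Classical Fisher information at `θ0` of the outcome statistics, with one-sided
derivatives taken within the parameter interval `J`. -/
def classicalFisher {n m : ℕ} {ι : Type} [Fintype ι] (J : Set ℝ)
    (Φ : ℝ → (Matrix (Fin n) (Fin n) ℂ →ₗ[ℂ] Matrix (Fin m) (Fin m) ℂ))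
    (M : ι → Matrix (Fin m) (Fin m) ℂ)
    (τ : Matrix (Fin n) (Fin n) ℂ) (θ0 : ℝ) : ℝ :=
  ∑ i : ι,
    if 0 < outcomeProb Φ M τ i θ0 then
      (derivWithin (outcomeProb Φ M τ i) J θ0) ^ 2 / outcomeProb Φ M τ i θ0
    else 0

/-- A parameter estimation task: a differentiable family of CPTP maps indexed by an
interval `J ⊆ ℝ` together with a POVM. -/
def IsEstimationTask {n m : ℕ} {ι : Type} [Fintype ι] (J : Set ℝ)
    (Φ : ℝ → (Matrix (Fin n) (Fin n) ℂ →ₗ[ℂ] Matrix (Fin m) (Fin m) ℂ))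
    (M : ι → Matrix (Fin m) (Fin m) ℂ) : Prop :=
  J.OrdConnected ∧ (∀ θ ∈ J, IsCPTP (Φ θ)) ∧ IsPOVM M ∧
    ∀ τ, IsDensityMatrix τ → ∀ i, DifferentiableOn ℝ (outcomeProb Φ M τ i) J

/-- The generalized robustness `R(ρ) = inf { λ ≥ 0 | ∃ density matrix ω,
(ρ + λω)/(1+λ) ∈ F }`, valued in `[0,∞]` with `inf ∅ = ∞`. -/
def genRobustness {n : ℕ} (F : Set (Matrix (Fin n) (Fin n) ℂ))
    (ρ : Matrix (Fin n) (Fin n) ℂ) : ℝ≥0∞ :=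
  ⨅ (l : ℝ) (_ : 0 ≤ l)
    (_ : ∃ ω, IsDensityMatrix ω ∧
        (((1 + l : ℝ) : ℂ))⁻¹ • (ρ + (l : ℂ) • ω) ∈ F),
    ENNReal.ofReal l

namespace Matrix

variable {ι : Type*} [Fintype ι]

instance instLocallyConvexSpace {m n 𝕜 E : Type*} [Semiring 𝕜] [PartialOrder 𝕜]
    [AddCommMonoid E] [TopologicalSpace E] [Module 𝕜 E] [LocallyConvexSpace 𝕜 E] :
    LocallyConvexSpace 𝕜 (Matrix m n E) :=
  inferInstanceAs (LocallyConvexSpace 𝕜 (m → n → E))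

theorem isClosed_setOf_posSemidef {𝕜 : Type*} [RCLike 𝕜] :
    IsClosed {A : Matrix ι ι 𝕜 | A.PosSemidef} := by
  simp only [posSemidef_iff_dotProduct_mulVec, Set.ofPred_and, Set.ofPred_forall]
  refine (isClosed_eq (by fun_prop) continuous_id).inter (isClosed_iInter fun x => ?_)
  exact isClosed_le continuous_const (by fun_prop)

theorem IsHermitian.posSemidef_of_re_nonneg {𝕜 : Type*} [RCLike 𝕜] {A : Matrix ι ι 𝕜}
    (hA : A.IsHermitian) (h : ∀ x, 0 ≤ RCLike.re (star x ⬝ᵥ A *ᵥ x)) : A.PosSemidef :=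
  PosSemidef.of_dotProduct_mulVec_nonneg hA fun x =>
    RCLike.nonneg_iff.mpr ⟨h x, hA.im_star_dotProduct_mulVec_self x⟩

open scoped MatrixOrder in
theorem PosSemidef.trace_mul_nonneg {𝕜 : Type*} [RCLike 𝕜] {A B : Matrix ι ι 𝕜}
    (hA : A.PosSemidef) (hB : B.PosSemidef) : 0 ≤ (A * B).trace := by
  classical
  obtain ⟨S, rfl⟩ := CStarAlgebra.nonneg_iff_eq_star_mul_self.mp (nonneg_iff_posSemidef.mpr hB)
  rw [← Matrix.mul_assoc, trace_mul_comm, ← Matrix.mul_assoc]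
  exact (hA.mul_mul_conjTranspose_same S).trace_nonneg

theorem PosSemidef.re_trace_pos {A : Matrix ι ι ℂ} (hA : A.PosSemidef) (h : A.trace ≠ 0) :
    0 < A.trace.re :=
  (Complex.pos_iff.mp (hA.trace_nonneg.lt_of_ne' h)).1

theorem exists_trace_mul_eq {R : Type*} [CommSemiring R] [DecidableEq ι]
    (f : Matrix ι ι R →ₗ[R] R) : ∃ B : Matrix ι ι R, ∀ X, f X = (B * X).trace := by
  refine ⟨of fun i j => f (single j i 1), fun X => ?_⟩
  have : f = traceLinearMap ι R R ∘ₗ mulLeftLinearMap ι R (of fun i j => f (single j i 1)) :=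
    ext_linearMap R fun i j => LinearMap.ext fun c => by
      have hc : single i j c = c • single i j (1 : R) := by rw [smul_single, smul_eq_mul, mul_one]
      simp only [LinearMap.comp_apply, singleLinearMap_apply, traceLinearMap_apply,
        mulLeftLinearMap_apply, hc, map_smul, trace_mul_single]
      simp
  exact LinearMap.congr_fun this X

theorem re_trace_realPart_mul {A X : Matrix ι ι ℂ} (hX : X.IsHermitian) :
    ((realPart A : Matrix ι ι ℂ) * X).trace.re = (A * X).trace.re := by
  have : (star A * X).trace = star (A * X).trace := by
    rw [← hX.eq, star_eq_conjTranspose, ← conjTranspose_mul, trace_conjTranspose, trace_mul_comm,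
      hX.eq]
  rw [realPart_apply_coe, smul_mul, add_mul, trace_smul, trace_add, this]
  simp only [Complex.real_smul, Complex.mul_re, Complex.add_re, Complex.star_def,
    Complex.conj_re, Complex.ofReal_re, Complex.ofReal_im, Complex.add_im, Complex.conj_im]
  ring

theorem exists_isHermitian_re_eq_re_trace_mul [DecidableEq ι] (f : Matrix ι ι ℂ →ₗ[ℂ] ℂ) :
    ∃ A : Matrix ι ι ℂ, A.IsHermitian ∧ ∀ X, X.IsHermitian → (f X).re = (A * X).trace.re := by
  obtain ⟨B, hB⟩ := exists_trace_mul_eq f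
  exact ⟨realPart B, (realPart B).2, fun X hX => by rw [hB, re_trace_realPart_mul hX]⟩

end Matrix

theorem ENNReal.iInf_ofReal_le_of_forall_not {P : ℝ → Prop} {s : ℝ≥0∞}
    (h : ∀ r, 0 ≤ r → ¬ P r → ENNReal.ofReal r ≤ s) :
    ⨅ (l : ℝ) (_ : 0 ≤ l) (_ : P l), ENNReal.ofReal l ≤ s := by
  by_contra! hlt
  obtain ⟨a, hsa, ha⟩ := exists_between hlt
  have hr : ENNReal.ofReal a.toReal = a := ENNReal.ofReal_toReal ha.ne_top
  refine (hsa.trans_le (hr ▸ h _ ENNReal.toReal_nonneg fun hP => ?_)).false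
  exact ha.not_ge (hr ▸ iInf₂_le_of_le a.toReal ENNReal.toReal_nonneg (iInf_le _ hP))

def densityMatrices (n : ℕ) : Set (Matrix (Fin n) (Fin n) ℂ) := {ω | IsDensityMatrix ω}

def robustnessMixture {n : ℕ} (r : ℝ) (ρ ω : Matrix (Fin n) (Fin n) ℂ) :
    Matrix (Fin n) (Fin n) ℂ :=
  ((1 + r : ℝ) : ℂ)⁻¹ • (ρ + (r : ℂ) • ω)

section DensityMatrices

variable {n : ℕ}

theorem convex_densityMatrices : Convex ℝ (densityMatrices n) := by
  intro ω hω σ hσ a b ha hb hab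
  refine ⟨(hω.1.smul ha).add (hσ.1.smul hb), ?_⟩
  rw [trace_add, trace_smul, trace_smul, hω.2, hσ.2, ← add_smul, hab, one_smul]

theorem IsDensityMatrix.norm_apply_le_one {ω : Matrix (Fin n) (Fin n) ℂ} (hω : IsDensityMatrix ω)
    (i j : Fin n) : ‖ω i j‖ ≤ 1 := by
  have hdiag : ∀ k, ω k k ≤ 1 := fun k => hω.2 ▸
    Finset.single_le_sum (f := fun k => ω k k) (fun k _ => hω.1.diag_nonneg) (Finset.mem_univ k)
  -- the principal `2 × 2` minor on `{i, j}` gives `|ω i j|² ≤ ω i i * ω j j`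
  have hdet := (hω.1.submatrix ![i, j]).det_nonneg
  simp only [det_fin_two, submatrix_apply, cons_val_zero, cons_val_one,
    ← hω.1.isHermitian.apply j i, Complex.star_def, Complex.mul_conj, sub_nonneg] at hdet
  have h1 : (Complex.normSq (ω i j) : ℂ) ≤ 1 :=
    hdet.trans (mul_le_one₀ (hdiag i) hω.1.diag_nonneg (hdiag j))
  rw [← Complex.sq_norm] at h1
  exact (sq_le_one_iff₀ (norm_nonneg _)).1 (by exact_mod_cast h1)

theorem isCompact_densityMatrices : IsCompact (densityMatrices n) := by
  refine (isCompact_univ_pi fun _ => isCompact_univ_pi fun _ =>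
    isCompact_closedBall (0 : ℂ) 1).of_isClosed_subset ?_ fun ω hω i _ j _ => ?_
  · exact isClosed_setOf_posSemidef.inter (isClosed_eq (by fun_prop) continuous_const)
  · simpa using hω.norm_apply_le_one i j

theorem isDensityMatrix_inv_re_trace_smul {ω : Matrix (Fin n) (Fin n) ℂ} (hω : ω.PosSemidef)
    (h : ω.trace ≠ 0) : IsDensityMatrix ((ω.trace.re)⁻¹ • ω) := by
  refine ⟨hω.smul (inv_nonneg.mpr (hω.re_trace_pos h).le), ?_⟩
  rw [trace_smul,
    Complex.eq_re_of_ofReal_le (z := ω.trace) (r := 0) (by simpa using hω.trace_nonneg),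
    Complex.ofReal_re, ← Complex.coe_smul, smul_eq_mul, ← Complex.ofReal_mul,
    inv_mul_cancel₀ (hω.re_trace_pos h).ne', Complex.ofReal_one]

theorem mul_re_trace_le_of_forall_isDensityMatrix {A ω : Matrix (Fin n) (Fin n) ℂ} {m : ℝ}
    (h : ∀ σ, IsDensityMatrix σ → m ≤ (A * σ).trace.re) (hω : ω.PosSemidef) :
    m * ω.trace.re ≤ (A * ω).trace.re := by
  by_cases h0 : ω.trace = 0
  · simp [hω.trace_eq_zero_iff.mp h0]
  have := h _ (isDensityMatrix_inv_re_trace_smul hω h0)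
  rwa [Matrix.mul_smul, trace_smul, Complex.smul_re, smul_eq_mul,
    le_inv_mul_iff₀ (hω.re_trace_pos h0), mul_comm] at this

theorem posSemidef_sub_smul_one_of_forall_le {A : Matrix (Fin n) (Fin n) ℂ} (hA : A.IsHermitian)
    {m : ℝ} (h : ∀ σ, IsDensityMatrix σ → m ≤ (A * σ).trace.re) :
    (A - (m : ℂ) • 1).PosSemidef := by
  refine (hA.sub (by simp [IsHermitian])).posSemidef_of_re_nonneg fun x => ?_
  have hx := mul_re_trace_le_of_forall_isDensityMatrix h (posSemidef_vecMulVec_self_star x)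
  rw [trace_vecMulVec, mul_vecMulVec, trace_vecMulVec, dotProduct_comm (A *ᵥ x),
    dotProduct_comm x] at hx
  rw [sub_mulVec, dotProduct_sub, smul_mulVec, one_mulVec, dotProduct_smul, RCLike.re_to_complex,
    Complex.sub_re, smul_eq_mul, Complex.re_ofReal_mul]
  linarith

theorem re_trace_sub_smul_one_mul {A σ : Matrix (Fin n) (Fin n) ℂ} (hσ : σ.trace = 1) (m : ℝ) :
    ((A - (m : ℂ) • 1) * σ).trace.re = (A * σ).trace.re - m := by
  rw [Matrix.sub_mul, smul_mul, Matrix.one_mul, trace_sub, trace_smul, hσ, smul_eq_mul, mul_one,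
    Complex.sub_re, Complex.ofReal_re]

theorem re_trace_mul_robustnessMixture (W ρ ω : Matrix (Fin n) (Fin n) ℂ) (r : ℝ) :
    (W * robustnessMixture r ρ ω).trace.re =
      (1 + r)⁻¹ * ((W * ρ).trace.re + r * (W * ω).trace.re) := by
  rw [robustnessMixture, Matrix.mul_smul, Matrix.mul_add, Matrix.mul_smul, trace_smul, trace_add,
    trace_smul, ← Complex.ofReal_inv, smul_eq_mul, smul_eq_mul, Complex.re_ofReal_mul,
    Complex.add_re, Complex.re_ofReal_mul]

theorem robustnessMixture_eq_homothety {r : ℝ} (hr : 0 ≤ r) (ρ ω : Matrix (Fin n) (Fin n) ℂ) :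
    robustnessMixture r ρ ω = AffineMap.homothety ρ (r / (1 + r)) ω := by
  rw [robustnessMixture, AffineMap.homothety_apply, vsub_eq_sub, vadd_eq_add,
    ← Complex.ofReal_inv, Complex.coe_smul, Complex.coe_smul]
  have : 1 + r ≠ 0 := by positivity
  match_scalars
  · field_simp
    ring
  · field_simp

theorem IsDensityMatrix.robustnessMixture {r : ℝ} (hr : 0 ≤ r) {ρ ω : Matrix (Fin n) (Fin n) ℂ}
    (hρ : IsDensityMatrix ρ) (hω : IsDensityMatrix ω) :
    IsDensityMatrix (robustnessMixture r ρ ω) := by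
  rw [robustnessMixture_eq_homothety hr, AffineMap.homothety_eq_lineMap]
  exact convex_densityMatrices.lineMap_mem hρ hω
    ⟨by positivity, div_le_one_of_le₀ (by linarith) (by positivity)⟩

theorem convex_robustnessMixture_image {r : ℝ} (hr : 0 ≤ r) (ρ : Matrix (Fin n) (Fin n) ℂ) :
    Convex ℝ (robustnessMixture r ρ '' densityMatrices n) := by
  rw [funext (robustnessMixture_eq_homothety hr ρ)]
  exact convex_densityMatrices.affine_image _

theorem isCompact_robustnessMixture_image (r : ℝ) (ρ : Matrix (Fin n) (Fin n) ℂ) :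
    IsCompact (robustnessMixture r ρ '' densityMatrices n) :=
  isCompact_densityMatrices.image (by unfold robustnessMixture; fun_prop)

theorem sub_one_le_of_re_trace_mul_robustnessMixture_le_one {W ρ ω : Matrix (Fin n) (Fin n) ℂ}
    (hW : W.PosSemidef) (hω : ω.PosSemidef) {l : ℝ} (hl : 0 ≤ l)
    (h : (W * robustnessMixture l ρ ω).trace.re ≤ 1) : (W * ρ).trace.re - 1 ≤ l := by
  have hWω : 0 ≤ (W * ω).trace.re := (Complex.nonneg_iff.mp (hW.trace_mul_nonneg hω)).1
  rw [re_trace_mul_robustnessMixture, inv_mul_le_iff₀ (by positivity)] at h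
  nlinarith

theorem exists_dual_witness_of_isHermitian_separating {F : Set (Matrix (Fin n) (Fin n) ℂ)}
    (hFne : F.Nonempty) (hFdm : ∀ σ ∈ F, IsDensityMatrix σ) {ρ : Matrix (Fin n) (Fin n) ℂ}
    (hρ : IsDensityMatrix ρ) {r u : ℝ} (hr : 0 ≤ r) {A : Matrix (Fin n) (Fin n) ℂ}
    (hA : A.IsHermitian) (hAF : ∀ σ ∈ F, (A * σ).trace.re < u)
    (hAmix : ∀ ω, IsDensityMatrix ω → u < (A * robustnessMixture r ρ ω).trace.re) :
    ∃ W : Matrix (Fin n) (Fin n) ℂ, W.PosSemidef ∧ (∀ σ ∈ F, (W * σ).trace.re ≤ 1) ∧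
      r ≤ (W * ρ).trace.re - 1 := by
  obtain ⟨ω₀, hω₀, hmin⟩ := isCompact_densityMatrices.exists_isMinOn ⟨ρ, hρ⟩
    (Continuous.continuousOn (f := fun ω => (A * ω).trace.re) (by fun_prop))
  set m := (A * ω₀).trace.re
  have hAm : (A - (m : ℂ) • 1).PosSemidef :=
    posSemidef_sub_smul_one_of_forall_le hA fun σ hσ => hmin hσ
  obtain ⟨σ₀, hσ₀⟩ := hFne
  have hmσ₀ : m ≤ (A * σ₀).trace.re := hmin (hFdm σ₀ hσ₀)
  have hmu : 0 < u - m := by linarith [hAF σ₀ hσ₀]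
  set W := (u - m)⁻¹ • (A - (m : ℂ) • 1)
  have hW : ∀ σ, IsDensityMatrix σ → (W * σ).trace.re = (u - m)⁻¹ * ((A * σ).trace.re - m) :=
    fun σ hσ => by
      rw [smul_mul, trace_smul, Complex.smul_re, re_trace_sub_smul_one_mul hσ.2, smul_eq_mul]
  refine ⟨W, hAm.smul (inv_nonneg.mpr hmu.le), fun σ hσ => ?_, ?_⟩
  · rw [hW σ (hFdm σ hσ), inv_mul_le_one₀ hmu]
    linarith [hAF σ hσ]
  · have hmix := hAmix ω₀ hω₀
    rw [re_trace_mul_robustnessMixture, lt_inv_mul_iff₀ (by positivity)] at hmix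
    rw [hW ρ hρ, le_sub_iff_add_le, le_inv_mul_iff₀ hmu]
    nlinarith

theorem exists_dual_witness_of_not_mem {F : Set (Matrix (Fin n) (Fin n) ℂ)} (hFne : F.Nonempty)
    (hFcl : IsClosed F) (hFconv : Convex ℝ F) (hFdm : ∀ σ ∈ F, IsDensityMatrix σ)
    {ρ : Matrix (Fin n) (Fin n) ℂ} (hρ : IsDensityMatrix ρ) {r : ℝ} (hr : 0 ≤ r)
    (hr_not : ∀ ω, IsDensityMatrix ω → robustnessMixture r ρ ω ∉ F) :
    ∃ W : Matrix (Fin n) (Fin n) ℂ, W.PosSemidef ∧ (∀ σ ∈ F, (W * σ).trace.re ≤ 1) ∧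
      r ≤ (W * ρ).trace.re - 1 := by
  have hdisj : Disjoint F (robustnessMixture r ρ '' densityMatrices n) :=
    Set.disjoint_right.mpr fun _ ⟨ω, hω, hmix⟩ => hmix ▸ hr_not ω hω
  obtain ⟨f, u, v, hfF, huv, hfmix⟩ := RCLike.geometric_hahn_banach_closed_compact (𝕜 := ℂ)
    hFconv hFcl (convex_robustnessMixture_image hr ρ) (isCompact_robustnessMixture_image r ρ) hdisj
  obtain ⟨A, hA, hfA⟩ := exists_isHermitian_re_eq_re_trace_mul f.toLinearMap
  refine exists_dual_witness_of_isHermitian_separating hFne hFdm hρ hr hA (u := u)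
    (fun σ hσ => ?_) fun ω hω => ?_
  · rw [← hfA σ (hFdm σ hσ).1.isHermitian]
    exact hfF σ hσ
  · rw [← hfA _ (hρ.robustnessMixture hr hω).1.isHermitian]
    exact huv.trans (hfmix _ ⟨ω, hω, rfl⟩)

end DensityMatrices

/-- duality for the generalized robustness:
`R(ρ) = sup { Re Tr(Wρ) − 1 | W ⪰ 0, Re Tr(Wσ) ≤ 1 ∀ σ ∈ F }`, as values in `[0,∞]`. -/
theorem genRobustness_duality {n : ℕ}
    (F : Set (Matrix (Fin n) (Fin n) ℂ)) (hFne : F.Nonempty) (hFcl : IsClosed F)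
    (hFconv : Convex ℝ F) (hFdm : ∀ σ ∈ F, IsDensityMatrix σ)
    (ρ : Matrix (Fin n) (Fin n) ℂ) (hρ : IsDensityMatrix ρ) :
    genRobustness F ρ =
      ⨆ (W : Matrix (Fin n) (Fin n) ℂ)
        (_ : W.PosSemidef ∧ ∀ σ ∈ F, ((W * σ).trace).re ≤ 1),
        ENNReal.ofReal (((W * ρ).trace).re - 1) := by
  refine le_antisymm (ENNReal.iInf_ofReal_le_of_forall_not fun r hr hr_not => ?_)
    (iSup₂_le fun W ⟨hW, hWF⟩ => le_iInf₂ fun l hl => le_iInf fun ⟨ω, hω, hmem⟩ => ?_)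
  · obtain ⟨W, hW, hWF, hWρ⟩ := exists_dual_witness_of_not_mem hFne hFcl hFconv hFdm hρ hr
      fun ω hω hmem => hr_not ⟨ω, hω, hmem⟩
    exact (ENNReal.ofReal_le_ofReal hWρ).trans (le_iSup₂_of_le W ⟨hW, hWF⟩ le_rfl)
  · exact ENNReal.ofReal_le_ofReal
      (sub_one_le_of_re_trace_mul_robustnessMixture_le_one hW hω.1 hl (hWF _ hmem))

end
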